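/- arXiv:2010.06345 — 9 statements merged into one kernel-verified Lean document; each statement's English description precedes it below -/
import Mathlib

section
/- If {e_k} is a frame over X with bounds B1, B2 and S is its frame operator, then the dual family ẽ_k := S⁻¹ e_k is a frame over X with frame bounds B2⁻¹ and B1⁻¹. -/
/-!
The frame inequalities say exactly that `B1 ≤ S ≤ B2` in the Loewner order, since
`∑ ‖⟪e k, x⟫‖² = re ⟪S x, x⟫`. Inversion reverses the order on positive invertible elements of
the C⋆-algebra `X →L[ℂ] X`, so `B2⁻¹ ≤ T ≤ B1⁻¹`. Finally `T` is self-adjoint, hence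
`∑ ‖⟪T (e k), x⟫‖² = ∑ ‖⟪e k, T x⟫‖² = re ⟪S (T x), T x⟫ = re ⟪T x, x⟫`.
-/

open scoped ComplexInnerProductSpace

open Set

namespace ContinuousLinearMap

variable {H : Type*} [NormedAddCommGroup H] [InnerProductSpace ℂ H]

lemma re_inner_algebraMap_apply_self (c : ℝ) (x : H) :
    (⟪algebraMap ℝ (H →L[ℂ] H) c x, x⟫).re = c * ‖x‖ ^ 2 := by
  simp [Algebra.algebraMap_eq_smul_one, ← Complex.ofReal_pow]

variable [CompleteSpace H]

lemma algebraMap_le_iff {A : H →L[ℂ] H} (hA : IsSelfAdjoint A) (c : ℝ) :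
    algebraMap ℝ (H →L[ℂ] H) c ≤ A ↔ ∀ x, c * ‖x‖ ^ 2 ≤ (⟪A x, x⟫).re := by
  simp only [le_def, isPositive_def', hA.sub (.algebraMap _ (.all c)), true_and, reApplyInnerSelf,
    sub_apply, inner_sub_left, RCLike.re_to_complex, Complex.sub_re,
    re_inner_algebraMap_apply_self, sub_nonneg]

lemma le_algebraMap_iff {A : H →L[ℂ] H} (hA : IsSelfAdjoint A) (c : ℝ) :
    A ≤ algebraMap ℝ (H →L[ℂ] H) c ↔ ∀ x, (⟪A x, x⟫).re ≤ c * ‖x‖ ^ 2 := by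
  simp only [le_def, isPositive_def', (IsSelfAdjoint.algebraMap _ (.all c)).sub hA, true_and,
    reApplyInnerSelf, sub_apply, inner_sub_left, RCLike.re_to_complex, Complex.sub_re,
    re_inner_algebraMap_apply_self, sub_nonneg]

lemma mem_Icc_algebraMap_iff {A : H →L[ℂ] H} (hA : IsSelfAdjoint A) (c d : ℝ) :
    A ∈ Icc (algebraMap ℝ (H →L[ℂ] H) c) (algebraMap ℝ (H →L[ℂ] H) d) ↔
      ∀ x, c * ‖x‖ ^ 2 ≤ (⟪A x, x⟫).re ∧ (⟪A x, x⟫).re ≤ d * ‖x‖ ^ 2 := by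
  rw [mem_Icc, algebraMap_le_iff hA, le_algebraMap_iff hA, forall_and]

end ContinuousLinearMap

namespace CStarAlgebra

variable {A : Type*} [CStarAlgebra A] [PartialOrder A] [StarOrderedRing A]

lemma inv_mem_Icc_algebraMap_inv {u : Aˣ} {c d : ℝ} (hc : 0 < c) (hd : 0 < d)
    (hu : (u : A) ∈ Icc (algebraMap ℝ A c) (algebraMap ℝ A d)) :
    (↑u⁻¹ : A) ∈ Icc (algebraMap ℝ A d⁻¹) (algebraMap ℝ A c⁻¹) := by
  let scalar (r : ℝ) (hr : 0 < r) : Aˣ :=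
    Units.map (algebraMap ℝ A).toMonoidHom (Units.mk0 r hr.ne')
  have hc_nonneg : 0 ≤ algebraMap ℝ A c := (isStrictlyPositive_algebraMap hc).nonneg
  have h_upper := CStarAlgebra.inv_le_inv (a := scalar c hc) (b := u) hc_nonneg hu.1
  have h_lower := CStarAlgebra.inv_le_inv (a := u) (b := scalar d hd) (hc_nonneg.trans hu.1) hu.2
  simp only [scalar, Units.coe_map_inv, Units.val_inv_eq_inv_val, Units.val_mk0] at h_upper h_lower
  exact ⟨h_lower, h_upper⟩

end CStarAlgebra

section Frame

variable {H : Type*} [NormedAddCommGroup H] [InnerProductSpace ℂ H]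

def IsFrameOperator {ι : Type*} (e : ι → H) (S : H →L[ℂ] H) : Prop :=
  ∀ x, HasSum (fun k => ⟪e k, x⟫ • e k) (S x)

namespace IsFrameOperator

variable {ι : Type*} {e : ι → H} {S : H →L[ℂ] H}

lemma hasSum_inner_self (hS : IsFrameOperator e S) (x : H) :
    HasSum (fun k => ((‖⟪e k, x⟫‖ ^ 2 : ℝ) : ℂ)) ⟪S x, x⟫ := by
  have h := (hS x).mapL (innerSL ℂ x)
  simp only [innerSL_apply_apply, inner_smul_right, ← inner_conj_symm x (e _),
    RCLike.mul_conj] at h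
  simpa [inner_conj_symm] using h.star

lemma hasSum_norm_inner_sq (hS : IsFrameOperator e S) (x : H) :
    HasSum (fun k => ‖⟪e k, x⟫‖ ^ 2) (⟪S x, x⟫).re :=
  Complex.hasSum_re (hS.hasSum_inner_self x)

lemma isPositive (hS : IsFrameOperator e S) : S.IsPositive := by
  refine (ContinuousLinearMap.isPositive_iff_complex S).2 fun x => ⟨?_, ?_⟩
  · rw [← (hS.hasSum_inner_self x).tsum_eq, ← Complex.ofReal_tsum]
    simp
  · exact (hS.hasSum_norm_inner_sq x).nonneg fun k => by positivity

lemma hasSum_norm_inner_sq_of_inverse [CompleteSpace H] (hS : IsFrameOperator e S)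
    {T : H →L[ℂ] H} (hT : IsSelfAdjoint T) (hST : S ∘L T = 1) (x : H) :
    HasSum (fun k => ‖⟪T (e k), x⟫‖ ^ 2) (⟪T x, x⟫).re := by
  have hSTx : S (T x) = x := by simpa using congr($hST x)
  have hsym : ∀ k, ⟪T (e k), x⟫ = ⟪e k, T x⟫ := fun k => hT.isSymmetric (e k) x
  have h := hS.hasSum_norm_inner_sq (T x)
  simp_rw [hsym]
  rwa [hSTx, show (⟪x, T x⟫).re = (⟪T x, x⟫).re from inner_re_symm (𝕜 := ℂ) x (T x)] at h

end IsFrameOperator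

end Frame

theorem dual_frame_is_frame_general
    {X : Type*} [NormedAddCommGroup X] [InnerProductSpace ℂ X] [CompleteSpace X]
    (e : ℕ → X) (B1 B2 : ℝ) (hB1 : 0 < B1) (hB2 : 0 < B2)
    (hlow : ∀ x : X, B1 * ‖x‖ ^ 2 ≤ ∑' k, ‖⟪e k, x⟫‖ ^ 2)
    (hupp : ∀ x : X, ∑' k, ‖⟪e k, x⟫‖ ^ 2 ≤ B2 * ‖x‖ ^ 2)
    (S T : X →L[ℂ] X)
    (hS : ∀ x : X, HasSum (fun k => ⟪e k, x⟫ • e k) (S x))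
    (hST : S ∘L T = 1) (hTS : T ∘L S = 1) :
    ∀ x : X, (Summable fun k => ‖⟪T (e k), x⟫‖ ^ 2) ∧
      B2⁻¹ * ‖x‖ ^ 2 ≤ ∑' k, ‖⟪T (e k), x⟫‖ ^ 2 ∧
      ∑' k, ‖⟪T (e k), x⟫‖ ^ 2 ≤ B1⁻¹ * ‖x‖ ^ 2 := by
  have hS_frame : IsFrameOperator e S := hS
  have hS_self : IsSelfAdjoint S := hS_frame.isPositive.isSelfAdjoint
  have hT_self : IsSelfAdjoint T := by
    have h := hS_self.ringInverse
    rwa [show Ring.inverse S = T from Ring.inverse_unit ⟨S, T, hST, hTS⟩] at h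
  have hS_bounds : S ∈ Icc (algebraMap ℝ (X →L[ℂ] X) B1) (algebraMap ℝ (X →L[ℂ] X) B2) :=
    (ContinuousLinearMap.mem_Icc_algebraMap_iff hS_self B1 B2).2 fun x => by
      rw [← (hS_frame.hasSum_norm_inner_sq x).tsum_eq]
      exact ⟨hlow x, hupp x⟩
  have hT_bounds : T ∈ Icc (algebraMap ℝ (X →L[ℂ] X) B2⁻¹) (algebraMap ℝ (X →L[ℂ] X) B1⁻¹) :=
    CStarAlgebra.inv_mem_Icc_algebraMap_inv (u := ⟨S, T, hST, hTS⟩) hB1 hB2 hS_bounds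
  intro x
  have h_dual := hS_frame.hasSum_norm_inner_sq_of_inverse hT_self hST x
  rw [h_dual.tsum_eq]
  exact ⟨h_dual.summable, (ContinuousLinearMap.mem_Icc_algebraMap_iff hT_self B2⁻¹ B1⁻¹).1 hT_bounds x⟩

/-- If `{e k}` is a frame over `X` with bounds `B1, B2` and `S` is its frame operator
(with inverse `T`), then the dual family `ẽ k := S⁻¹ (e k)` is a frame over `X` with
frame bounds `B2⁻¹` and `B1⁻¹`. -/
theorem dual_frame_is_frame
    {X : Type*} [NormedAddCommGroup X] [InnerProductSpace ℂ X] [CompleteSpace X]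
    (e : ℕ → X) (B1 B2 : ℝ) (hB1 : 0 < B1) (hB2 : 0 < B2)
    (hsum : ∀ x : X, Summable fun k => ‖⟪e k, x⟫‖ ^ 2)
    (hlow : ∀ x : X, B1 * ‖x‖ ^ 2 ≤ ∑' k, ‖⟪e k, x⟫‖ ^ 2)
    (hupp : ∀ x : X, ∑' k, ‖⟪e k, x⟫‖ ^ 2 ≤ B2 * ‖x‖ ^ 2)
    (S T : X →L[ℂ] X)
    (hS : ∀ x : X, HasSum (fun k => ⟪e k, x⟫ • e k) (S x))
    (hST : S ∘L T = 1) (hTS : T ∘L S = 1) :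
    ∀ x : X, (Summable fun k => ‖⟪T (e k), x⟫‖ ^ 2) ∧
      B2⁻¹ * ‖x‖ ^ 2 ≤ ∑' k, ‖⟪T (e k), x⟫‖ ^ 2 ∧
      ∑' k, ‖⟪T (e k), x⟫‖ ^ 2 ≤ B1⁻¹ * ‖x‖ ^ 2 :=
  dual_frame_is_frame_general e B1 B2 hB1 hB2 hlow hupp S T hS hST hTS
end

section
/- With ẽ_k^N := (2/(B1+B2)) Σ_{j=0}^N R^j e_k denoting the truncated dual frame approximation, for every x ∈ X it holds that ‖x − Σ_k ⟨x,e_k⟩ ẽ_k^N‖ ≤ ((B2−B1)/(B2+B1))^{N+1} ‖x‖. -/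
open scoped ComplexInnerProductSpace

lemma aux_symm_norm_le {X : Type*} [NormedAddCommGroup X] [InnerProductSpace ℂ X]
    (T : X →L[ℂ] X) (r : ℝ)
    (hsymm : ∀ u v : X, ⟪T u, v⟫ = ⟪u, T v⟫)
    (hbound : ∀ z : X, |Complex.re ⟪T z, z⟫| ≤ r * ‖z‖ ^ 2) :
    ∀ x : X, ‖T x‖ ≤ r * ‖x‖ := by
  intro x
  rcases eq_or_ne (T x) 0 with h0 | h0
  · rw [h0, norm_zero]
    rcases eq_or_ne x 0 with hx | hx
    · simp [hx]
    · have hr : 0 ≤ r := by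
        have h1 := (abs_nonneg _).trans (hbound x)
        have h2 : (0:ℝ) < ‖x‖ ^ 2 := pow_pos (norm_pos_iff.mpr hx) 2
        nlinarith
      exact mul_nonneg hr (norm_nonneg x)
  · have hx : x ≠ 0 := by rintro rfl; simp at h0
    have hTx : (0:ℝ) < ‖T x‖ := norm_pos_iff.mpr h0
    have hxn : (0:ℝ) < ‖x‖ := norm_pos_iff.mpr hx
    set a : ℝ := ‖x‖ / ‖T x‖ with ha
    have ha0 : 0 ≤ a := by positivity
    set y : X := (a : ℂ) • T x with hy
    have hny : ‖y‖ = ‖x‖ := by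
      rw [hy, norm_smul]
      simp [Complex.norm_real, abs_of_nonneg ha0, ha]
      field_simp
    have hrey : Complex.re ⟪T x, y⟫ = ‖x‖ * ‖T x‖ := by
      have h1 : ⟪T x, y⟫ = ((a * ‖T x‖ ^ 2 : ℝ) : ℂ) := by
        rw [hy, inner_smul_right, inner_self_eq_norm_sq_to_K (𝕜 := ℂ)]
        push_cast
        rfl
      rw [h1, Complex.ofReal_re, ha]
      field_simp
    have hexp : ∀ u v : X, ⟪T (u + v), u + v⟫
        = ⟪T u, u⟫ + ⟪T u, v⟫ + ⟪T v, u⟫ + ⟪T v, v⟫ := by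
      intro u v
      rw [map_add, inner_add_left, inner_add_right, inner_add_right]
      ring
    have hpol : Complex.re ⟪T (x + y), x + y⟫ - Complex.re ⟪T (x - y), x - y⟫
        = 4 * Complex.re ⟪T x, y⟫ := by
      have h1 := hexp x y
      have h2 := hexp x (-y)
      have hyx : Complex.re ⟪T y, x⟫ = Complex.re ⟪T x, y⟫ := by
        rw [hsymm y x, ← inner_conj_symm y (T x), Complex.conj_re]
      rw [sub_eq_add_neg x y] at *
      rw [h1, h2] at *
      simp only [map_neg, inner_neg_left, inner_neg_right, neg_neg, Complex.add_re,
        Complex.neg_re]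
      linarith
    have key : 4 * (‖x‖ * ‖T x‖) ≤ 4 * (r * ‖x‖ ^ 2) := by
      have hb1 := (abs_le.mp (hbound (x + y))).2
      have hb2 := (abs_le.mp (hbound (x - y))).1
      have hpar := parallelogram_law_with_norm ℂ x y
      rw [← hrey, ← hpol]
      have : r * ‖x + y‖ ^ 2 + r * ‖x - y‖ ^ 2 = r * (‖x + y‖ ^ 2 + ‖x - y‖ ^ 2) := by ring
      calc Complex.re ⟪T (x + y), x + y⟫ - Complex.re ⟪T (x - y), x - y⟫
          ≤ r * ‖x + y‖ ^ 2 + r * ‖x - y‖ ^ 2 := by linarith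
        _ = r * (‖x + y‖ ^ 2 + ‖x - y‖ ^ 2) := by ring
        _ = r * (2 * (‖x‖ ^ 2 + ‖y‖ ^ 2)) := by
              have : ‖x + y‖ ^ 2 + ‖x - y‖ ^ 2 = 2 * (‖x‖ ^ 2 + ‖y‖ ^ 2) := by
                have := hpar; nlinarith [hpar]
              rw [this]
        _ = 4 * (r * ‖x‖ ^ 2) := by rw [hny]; ring
    have : ‖x‖ * ‖T x‖ ≤ r * ‖x‖ ^ 2 := by linarith
    calc ‖T x‖ = (‖x‖ * ‖T x‖) / ‖x‖ := by field_simp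
      _ ≤ (r * ‖x‖ ^ 2) / ‖x‖ := by gcongr
      _ = r * ‖x‖ := by field_simp

/-- With `ẽ_k^N := (2/(B1+B2)) ∑_{j=0}^N R^j (e k)` the truncated dual frame
approximation, for every `x ∈ X` one has
`‖x − ∑_k ⟪e k, x⟫ • ẽ_k^N‖ ≤ ((B2−B1)/(B2+B1))^(N+1) ‖x‖`. -/
theorem truncated_dual_frame_error
    {X : Type*} [NormedAddCommGroup X] [InnerProductSpace ℂ X] [CompleteSpace X]
    (e : ℕ → X) (B1 B2 : ℝ) (hB1 : 0 < B1) (hB2 : 0 < B2) (hB12 : B1 ≤ B2)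
    (hsum : ∀ x : X, Summable fun k => ‖⟪e k, x⟫‖ ^ 2)
    (hlow : ∀ x : X, B1 * ‖x‖ ^ 2 ≤ ∑' k, ‖⟪e k, x⟫‖ ^ 2)
    (hupp : ∀ x : X, ∑' k, ‖⟪e k, x⟫‖ ^ 2 ≤ B2 * ‖x‖ ^ 2)
    (S : X →L[ℂ] X)
    (hS : ∀ x : X, HasSum (fun k => ⟪e k, x⟫ • e k) (S x))
    (R : X →L[ℂ] X)
    (hR : R = 1 - ((2 / (B1 + B2) : ℝ) : ℂ) • S)
    (N : ℕ) :
    ∀ x : X,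
      ‖x - ∑' k, ⟪e k, x⟫ •
          (((2 / (B1 + B2) : ℝ) : ℂ) • ∑ j ∈ Finset.range (N + 1), (R ^ j) (e k))‖ ≤
        ((B2 - B1) / (B2 + B1)) ^ (N + 1) * ‖x‖ := by
  have hBB : (0:ℝ) < B1 + B2 := by linarith
  have hBB' : (0:ℝ) < B2 + B1 := by linarith
  set d : ℝ := 2 / (B1 + B2) with hd
  set c : ℂ := ((d : ℝ) : ℂ) with hc
  set r : ℝ := (B2 - B1) / (B2 + B1) with hrdef
  have hd0 : 0 ≤ d := by positivity
  have hr0 : 0 ≤ r := by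
    apply div_nonneg (by linarith) (by linarith)
  -- symmetry of S
  have hSsymm : ∀ u v : X, ⟪S u, v⟫ = ⟪u, S v⟫ := by
    intro u v
    have h1 : HasSum (fun k => ⟪u, ⟪e k, v⟫ • e k⟫) ⟪u, S v⟫ :=
      (hS v).mapL (innerSL ℂ u)
    have h2 : HasSum (fun k => ⟪v, ⟪e k, u⟫ • e k⟫) ⟪v, S u⟫ :=
      (hS u).mapL (innerSL ℂ v)
    have h3 := h2.star
    have h4 : (fun k => star ⟪v, ⟪e k, u⟫ • e k⟫) = fun k => ⟪u, ⟪e k, v⟫ • e k⟫ := by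
      funext k
      simp only [inner_smul_right, star_mul']
      rw [show star ⟪v, e k⟫ = ⟪e k, v⟫ from inner_conj_symm (e k) v,
        show star ⟪e k, u⟫ = ⟪u, e k⟫ from inner_conj_symm u (e k)]
      ring
    rw [h4] at h3
    have h5 : star ⟪v, S u⟫ = ⟪u, S v⟫ := h3.unique h1
    rw [← h5, RCLike.star_def, inner_conj_symm]
  -- value of ⟪z, S z⟫
  have hSz : ∀ z : X, ⟪z, S z⟫ = ((∑' k, ‖⟪e k, z⟫‖ ^ 2 : ℝ) : ℂ) := by
    intro z
    have h1 : HasSum (fun k => ⟪z, ⟪e k, z⟫ • e k⟫) ⟪z, S z⟫ :=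
      (hS z).mapL (innerSL ℂ z)
    have h2 : (fun k => ⟪z, ⟪e k, z⟫ • e k⟫)
        = fun k => ((‖⟪e k, z⟫‖ ^ 2 : ℝ) : ℂ) := by
      funext k
      rw [inner_smul_right, ← inner_conj_symm z (e k), Complex.mul_conj']
      norm_cast
    rw [h2] at h1
    have h3 : HasSum (fun k => ((‖⟪e k, z⟫‖ ^ 2 : ℝ) : ℂ))
        (((∑' k, ‖⟪e k, z⟫‖ ^ 2 : ℝ) : ℂ)) :=
      ((hsum z).hasSum).mapL Complex.ofRealCLM
    exact h1.unique h3
  -- symmetry of R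
  have hRsymm : ∀ u v : X, ⟪R u, v⟫ = ⟪u, R v⟫ := by
    intro u v
    rw [hR]
    simp only [ContinuousLinearMap.sub_apply, ContinuousLinearMap.one_apply,
      ContinuousLinearMap.smul_apply, inner_sub_left, inner_sub_right,
      inner_smul_left, inner_smul_right, hc, Complex.conj_ofReal]
    rw [hSsymm u v]
  -- bound on ⟪R z, z⟫
  have hRbound : ∀ z : X, |Complex.re ⟪R z, z⟫| ≤ r * ‖z‖ ^ 2 := by
    intro z
    have h1 : ⟪R z, z⟫ = ((‖z‖ ^ 2 - d * (∑' k, ‖⟪e k, z⟫‖ ^ 2) : ℝ) : ℂ) := by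
      rw [hR]
      simp only [ContinuousLinearMap.sub_apply, ContinuousLinearMap.one_apply,
        ContinuousLinearMap.smul_apply, inner_sub_left, inner_smul_left,
        hc, Complex.conj_ofReal]
      rw [hSsymm z z, hSz z, inner_self_eq_norm_sq_to_K (𝕜 := ℂ)]
      push_cast
      rfl
    rw [h1, Complex.ofReal_re]
    set t : ℝ := ∑' k, ‖⟪e k, z⟫‖ ^ 2 with ht
    have hl := hlow z
    have hu := hupp z
    rw [abs_le]
    constructor
    · have h3 : d * t ≤ d * (B2 * ‖z‖ ^ 2) := mul_le_mul_of_nonneg_left hu hd0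
      have h4 : ‖z‖ ^ 2 - d * (B2 * ‖z‖ ^ 2) = -(r * ‖z‖ ^ 2) := by
        rw [hd, hrdef]
        field_simp
        ring
      linarith
    · have h3 : d * (B1 * ‖z‖ ^ 2) ≤ d * t := mul_le_mul_of_nonneg_left hl hd0
      have h4 : ‖z‖ ^ 2 - d * (B1 * ‖z‖ ^ 2) = r * ‖z‖ ^ 2 := by
        rw [hd, hrdef]
        field_simp
        ring
      linarith
  have hnorm : ∀ z : X, ‖R z‖ ≤ r * ‖z‖ := aux_symm_norm_le R r hRsymm hRbound
  have hpow : ∀ (n : ℕ) (z : X), ‖(R ^ n) z‖ ≤ r ^ n * ‖z‖ := by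
    intro n
    induction n with
    | zero => intro z; simp
    | succ n ih =>
      intro z
      rw [pow_succ, ContinuousLinearMap.mul_apply]
      calc ‖(R ^ n) (R z)‖ ≤ r ^ n * ‖R z‖ := ih (R z)
        _ ≤ r ^ n * (r * ‖z‖) := by
            exact mul_le_mul_of_nonneg_left (hnorm z) (pow_nonneg hr0 n)
        _ = r ^ (n + 1) * ‖z‖ := by ring
  intro x
  set A : X →L[ℂ] X := c • (∑ j ∈ Finset.range (N + 1), R ^ j) with hA
  have hterm : ∀ k, ⟪e k, x⟫ • (c • ∑ j ∈ Finset.range (N + 1), (R ^ j) (e k))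
      = A (⟪e k, x⟫ • e k) := by
    intro k
    rw [hA]
    simp only [ContinuousLinearMap.smul_apply, ContinuousLinearMap.sum_apply, map_smul]
  have hsumA : HasSum (fun k => A (⟪e k, x⟫ • e k)) (A (S x)) := (hS x).mapL A
  have htsum : (∑' k, ⟪e k, x⟫ • (c • ∑ j ∈ Finset.range (N + 1), (R ^ j) (e k)))
      = A (S x) := by
    rw [tsum_congr hterm]
    exact hsumA.tsum_eq
  have hgeo : x - A (S x) = (R ^ (N + 1)) x := by
    have hcS : c • S = 1 - R := by rw [hR, sub_sub_cancel]
    have hAS : A * S = 1 - R ^ (N + 1) := by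
      have h5 : (∑ j ∈ Finset.range (N + 1), R ^ j) * (1 - R) = 1 - R ^ (N + 1) := by
        have h6 := geom_sum_mul R (N + 1)
        have h7 : (∑ j ∈ Finset.range (N + 1), R ^ j) * (1 - R)
            = -((∑ j ∈ Finset.range (N + 1), R ^ j) * (R - 1)) := by noncomm_ring
        rw [h7, h6, neg_sub]
      calc A * S = (∑ j ∈ Finset.range (N + 1), R ^ j) * (c • S) := by
            rw [hA]; rw [smul_mul_assoc, mul_smul_comm]
        _ = 1 - R ^ (N + 1) := by rw [hcS, h5]
    have h8 : A (S x) = (A * S) x := rfl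
    rw [h8, hAS]
    simp only [ContinuousLinearMap.sub_apply, ContinuousLinearMap.one_apply]
    abel
  rw [htsum, hgeo]
  exact hpow (N + 1) x
end

section
/- Under the frame intertwining assumption, x ∈ N(A) if and only if for every k ∈ ℕ the coefficient vector (⟨x_m, e_k^m⟩)_m lies in the null space of Λ_k; moreover, Ax = y if and only if Λ_k·(⟨x_m,e_k^m⟩)_m = (⟨y_n,f_k^n⟩)_n for all k ∈ ℕ. -/
/-!
A lower frame bound makes the frame coefficients of a vector determine it, so `A x = y` can be
tested coefficientwise in every output component; the intertwining relation identifies the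
coefficients of `A x` with `Λ k` applied to those of `x`. The null-space statement is the
case `y = 0`.
-/

open scoped ComplexInnerProductSpace

theorem eq_of_inner_eq_of_lower_frame_bound {𝕜 E ι : Type*} [RCLike 𝕜]
    [NormedAddCommGroup E] [InnerProductSpace 𝕜 E] {f : ι → E} {C : ℝ} (hC : 0 < C)
    (hf : ∀ y : E, C * ‖y‖ ^ 2 ≤ ∑' k, ‖inner 𝕜 (f k) y‖ ^ 2) {y z : E}
    (h : ∀ k, inner 𝕜 (f k) y = inner 𝕜 (f k) z) : y = z := by
  have hcoeff : ∀ k, inner 𝕜 (f k) (y - z) = 0 := fun k => by rw [inner_sub_right, h k, sub_self]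
  have hbound : C * ‖y - z‖ ^ 2 ≤ 0 := by simpa [hcoeff] using hf (y - z)
  have hnorm : ‖y - z‖ ^ 2 = 0 :=
    le_antisymm (nonpos_of_mul_nonpos_right hbound hC) (sq_nonneg _)
  simpa [sub_eq_zero] using hnorm

theorem mulVec_frame_coeff_eq_of_intertwining {M N : ℕ}
    {Xs : Fin M → Type*} [∀ m, NormedAddCommGroup (Xs m)] [∀ m, InnerProductSpace ℂ (Xs m)]
    {Ys : Fin N → Type*} [∀ n, NormedAddCommGroup (Ys n)] [∀ n, InnerProductSpace ℂ (Ys n)]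
    {A : PiLp 2 Xs → PiLp 2 Ys} {e : ∀ m, ℕ → Xs m} {f : ∀ n, ℕ → Ys n}
    {Λ : ℕ → Matrix (Fin N) (Fin M) ℂ}
    (hΛ : ∀ (k : ℕ) (x : PiLp 2 Xs) (n : Fin N),
      ⟪f n k, A x n⟫ = ∑ m, Λ k n m * ⟪e m k, x m⟫) (k : ℕ) (x : PiLp 2 Xs) :
    (Λ k).mulVec (fun m => ⟪e m k, x m⟫) = fun n => ⟪f n k, A x n⟫ := by
  ext n
  simp only [Matrix.mulVec, dotProduct, hΛ]

theorem frame_nullspace_and_solution_characterization_general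
    {M N : ℕ}
    {Xs : Fin M → Type*} [∀ m, NormedAddCommGroup (Xs m)]
    [∀ m, InnerProductSpace ℂ (Xs m)] [∀ m, CompleteSpace (Xs m)]
    {Ys : Fin N → Type*} [∀ n, NormedAddCommGroup (Ys n)]
    [∀ n, InnerProductSpace ℂ (Ys n)] [∀ n, CompleteSpace (Ys n)]
    (A : PiLp 2 Xs →L[ℂ] PiLp 2 Ys)
    (e : ∀ m, ℕ → Xs m) (f : ∀ n, ℕ → Ys n)
    (C1 C2 : ℝ) (hC1 : 0 < C1)
    (hframe_f : ∀ (n) (y : Ys n), (Summable fun k => ‖⟪f n k, y⟫‖ ^ 2) ∧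
      C1 * ‖y‖ ^ 2 ≤ ∑' k, ‖⟪f n k, y⟫‖ ^ 2 ∧ ∑' k, ‖⟪f n k, y⟫‖ ^ 2 ≤ C2 * ‖y‖ ^ 2)
    (Λ : ℕ → Matrix (Fin N) (Fin M) ℂ)
    (hΛ : ∀ (k : ℕ) (x : PiLp 2 Xs) (n : Fin N),
      ⟪f n k, A x n⟫ = ∑ m, Λ k n m * ⟪e m k, x m⟫) :
    (∀ x : PiLp 2 Xs,
      A x = 0 ↔ ∀ k, (Λ k).mulVec (fun m => ⟪e m k, x m⟫) = 0) ∧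
    (∀ (x : PiLp 2 Xs) (y : PiLp 2 Ys),
      A x = y ↔ ∀ k,
        (Λ k).mulVec (fun m => ⟪e m k, x m⟫) = fun n => ⟪f n k, y n⟫) := by
  have solution : ∀ (x : PiLp 2 Xs) (y : PiLp 2 Ys), A x = y ↔ ∀ k,
      (Λ k).mulVec (fun m => ⟪e m k, x m⟫) = fun n => ⟪f n k, y n⟫ := by
    intro x y
    simp only [mulVec_frame_coeff_eq_of_intertwining hΛ, funext_iff]
    refine ⟨fun h k n => by rw [h], fun h => PiLp.ext fun n => ?_⟩
    exact eq_of_inner_eq_of_lower_frame_bound hC1 (fun y => (hframe_f n y).2.1) (h · n)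
  refine ⟨fun x => ?_, solution⟩
  simpa only [PiLp.zero_apply, inner_zero_right, Pi.zero_def] using solution x 0

/-- Under the frame intertwining assumption, `x ∈ N(A)` iff for every `k` the
coefficient vector `(⟪e m k, x m⟫)_m` lies in the null space of `Λ k`; and `Ax = y` iff
`Λ k ⬝ (⟪e m k, x m⟫)_m = (⟪f n k, y n⟫)_n` for all `k`. -/
theorem frame_nullspace_and_solution_characterization
    {M N : ℕ}
    {Xs : Fin M → Type*} [∀ m, NormedAddCommGroup (Xs m)]
    [∀ m, InnerProductSpace ℂ (Xs m)] [∀ m, CompleteSpace (Xs m)]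
    {Ys : Fin N → Type*} [∀ n, NormedAddCommGroup (Ys n)]
    [∀ n, InnerProductSpace ℂ (Ys n)] [∀ n, CompleteSpace (Ys n)]
    (A : PiLp 2 Xs →L[ℂ] PiLp 2 Ys)
    (e : ∀ m, ℕ → Xs m) (f : ∀ n, ℕ → Ys n)
    (C1 C2 : ℝ) (hC1 : 0 < C1) (hC2 : 0 < C2)
    (hframe_f : ∀ (n) (y : Ys n), (Summable fun k => ‖⟪f n k, y⟫‖ ^ 2) ∧
      C1 * ‖y‖ ^ 2 ≤ ∑' k, ‖⟪f n k, y⟫‖ ^ 2 ∧ ∑' k, ‖⟪f n k, y⟫‖ ^ 2 ≤ C2 * ‖y‖ ^ 2)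
    (Λ : ℕ → Matrix (Fin N) (Fin M) ℂ)
    (hΛ : ∀ (k : ℕ) (x : PiLp 2 Xs) (n : Fin N),
      ⟪f n k, A x n⟫ = ∑ m, Λ k n m * ⟪e m k, x m⟫) :
    (∀ x : PiLp 2 Xs,
      A x = 0 ↔ ∀ k, (Λ k).mulVec (fun m => ⟪e m k, x m⟫) = 0) ∧
    (∀ (x : PiLp 2 Xs) (y : PiLp 2 Ys),
      A x = y ↔ ∀ k,
        (Λ k).mulVec (fun m => ⟪e m k, x m⟫) = fun n => ⟪f n k, y n⟫) :=
  frame_nullspace_and_solution_characterization_general A e f C1 C2 hC1 hframe_f Λ hΛ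
end

section
/- Suppose the frame intertwining assumption holds, y ∈ R(A), and N(Λ_k) = {0} for all k. Then 𝒜y (defined via the pseudo-inverses Λ_k† applied to the frame coefficients of y, synthesized with the dual frames ẽ_k^m) is a well-defined element of X and is the unique solution of Ax = y. -/
open scoped ComplexInnerProductSpace Matrix

/-!
On each `Xs m` the dual frame `T (e k)` reconstructs a vector from its frame coefficients, since
`x = T (S x) = ∑ ⟪e k, x⟫ • T (e k)`. The intertwining relation says that the coefficients of
`A x` are `Λ k` applied to those of `x`; as `Λ k` is injective, `Λ k† Λ k` is the identity, so
`Λ k†` recovers the coefficients of any solution `x` of `A x = y` from `y` alone. Synthesising them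
gives back `x`, which proves existence and, since the series has a unique limit, uniqueness.
-/

namespace Matrix

variable {m n R : Type*} [Fintype m] [Fintype n] [Ring R]

theorem mulVec_mulVec_of_mul_mul_eq_self {Λ : Matrix m n R} {Λd : Matrix n m R}
    (hMP : Λ * Λd * Λ = Λ) (hinj : ∀ h, Λ *ᵥ h = 0 → h = 0) (h : n → R) :
    Λd *ᵥ (Λ *ᵥ h) = h := by
  refine sub_eq_zero.mp (hinj _ ?_)
  rw [mulVec_sub, mulVec_mulVec, mulVec_mulVec, hMP, sub_self]

end Matrix

theorem hasSum_inner_smul_of_comp_eq_one {𝕜 E ι : Type*} [RCLike 𝕜] [NormedAddCommGroup E]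
    [InnerProductSpace 𝕜 E] {e : ι → E} {S T : E →L[𝕜] E}
    (hS : ∀ x, HasSum (fun k => inner 𝕜 (e k) x • e k) (S x)) (hTS : T ∘L S = 1) (x : E) :
    HasSum (fun k => inner 𝕜 (e k) x • T (e k)) x := by
  have hx : T (S x) = x := by simpa using congrArg (fun φ : E →L[𝕜] E => φ x) hTS
  simpa only [hx, map_smul] using T.hasSum (hS x)

theorem frame_unique_solution_general
    {M N : ℕ}
    {Xs : Fin M → Type*} [∀ m, NormedAddCommGroup (Xs m)]
    [∀ m, InnerProductSpace ℂ (Xs m)]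
    {Ys : Fin N → Type*} [∀ n, NormedAddCommGroup (Ys n)]
    [∀ n, InnerProductSpace ℂ (Ys n)]
    (A : PiLp 2 Xs →L[ℂ] PiLp 2 Ys)
    (e : ∀ m, ℕ → Xs m) (f : ∀ n, ℕ → Ys n)
    (S T : ∀ m, Xs m →L[ℂ] Xs m)
    (hS : ∀ (m) (x : Xs m), HasSum (fun k => ⟪e m k, x⟫ • e m k) (S m x))
    (hTS : ∀ m, T m ∘L S m = 1)
    (Λ : ℕ → Matrix (Fin N) (Fin M) ℂ)
    (hΛ : ∀ (k : ℕ) (x : PiLp 2 Xs) (n : Fin N),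
      ⟪f n k, A x n⟫ = ∑ m, Λ k n m * ⟪e m k, x m⟫)
    -- trivial null spaces
    (hinj : ∀ (k : ℕ) (h : Fin M → ℂ), (Λ k).mulVec h = 0 → h = 0)
    -- `Λd k` is the Moore–Penrose pseudo-inverse of `Λ k`
    (Λd : ℕ → Matrix (Fin M) (Fin N) ℂ)
    (hMP1 : ∀ k, Λ k * Λd k * Λ k = Λ k)
    (y : PiLp 2 Ys) (hy : ∃ x0, A x0 = y) :
    ∃ x : PiLp 2 Xs,
      (∀ m, HasSum
        (fun k => ((Λd k).mulVec (fun n => ⟪f n k, y n⟫) m) • T m (e m k)) (x m)) ∧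
      A x = y ∧ (∀ x' : PiLp 2 Xs, A x' = y → x' = x) := by
  obtain ⟨x0, rfl⟩ := hy
  have hcoef : ∀ (x : PiLp 2 Xs) k,
      Λd k *ᵥ (fun n => ⟪f n k, A x n⟫) = fun m => ⟪e m k, x m⟫ := fun x k => by
    rw [show (fun n => ⟪f n k, A x n⟫) = Λ k *ᵥ fun m => ⟪e m k, x m⟫ from funext (hΛ k x),
      Matrix.mulVec_mulVec_of_mul_mul_eq_self (hMP1 k) (hinj k)]
  have hsynth : ∀ (x : PiLp 2 Xs) m,
      HasSum (fun k => (Λd k *ᵥ (fun n => ⟪f n k, A x n⟫)) m • T m (e m k)) (x m) :=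
    fun x m => by simpa only [hcoef] using hasSum_inner_smul_of_comp_eq_one (hS m) (hTS m) (x m)
  refine ⟨x0, hsynth x0, rfl, fun x' hx' => PiLp.ext fun m => ?_⟩
  have hx'm := hsynth x' m
  rw [hx'] at hx'm
  exact hx'm.unique (hsynth x0 m)

/-- If the intertwining assumption holds, `y ∈ R(A)` and `N(Λ k) = {0}` for all `k`,
then `𝒜y` (synthesis of the coefficients `Λ k† ⬝ (⟪f n k, y n⟫)_n` with the dual frames
`ẽ m k = T m (e m k)`) is a well-defined element of `X` and the unique solution of
`A x = y`. -/
theorem frame_unique_solution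
    {M N : ℕ}
    {Xs : Fin M → Type*} [∀ m, NormedAddCommGroup (Xs m)]
    [∀ m, InnerProductSpace ℂ (Xs m)] [∀ m, CompleteSpace (Xs m)]
    {Ys : Fin N → Type*} [∀ n, NormedAddCommGroup (Ys n)]
    [∀ n, InnerProductSpace ℂ (Ys n)] [∀ n, CompleteSpace (Ys n)]
    (A : PiLp 2 Xs →L[ℂ] PiLp 2 Ys)
    (e : ∀ m, ℕ → Xs m) (f : ∀ n, ℕ → Ys n)
    (B1 B2 C1 C2 : ℝ) (hB1 : 0 < B1) (hB2 : 0 < B2) (hC1 : 0 < C1) (hC2 : 0 < C2)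
    (hframe_e : ∀ (m) (x : Xs m), (Summable fun k => ‖⟪e m k, x⟫‖ ^ 2) ∧
      B1 * ‖x‖ ^ 2 ≤ ∑' k, ‖⟪e m k, x⟫‖ ^ 2 ∧ ∑' k, ‖⟪e m k, x⟫‖ ^ 2 ≤ B2 * ‖x‖ ^ 2)
    (hframe_f : ∀ (n) (y : Ys n), (Summable fun k => ‖⟪f n k, y⟫‖ ^ 2) ∧
      C1 * ‖y‖ ^ 2 ≤ ∑' k, ‖⟪f n k, y⟫‖ ^ 2 ∧ ∑' k, ‖⟪f n k, y⟫‖ ^ 2 ≤ C2 * ‖y‖ ^ 2)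
    (S T : ∀ m, Xs m →L[ℂ] Xs m)
    (hS : ∀ (m) (x : Xs m), HasSum (fun k => ⟪e m k, x⟫ • e m k) (S m x))
    (hST : ∀ m, S m ∘L T m = 1) (hTS : ∀ m, T m ∘L S m = 1)
    (Λ : ℕ → Matrix (Fin N) (Fin M) ℂ)
    (hΛ : ∀ (k : ℕ) (x : PiLp 2 Xs) (n : Fin N),
      ⟪f n k, A x n⟫ = ∑ m, Λ k n m * ⟪e m k, x m⟫)
    -- trivial null spaces
    (hinj : ∀ (k : ℕ) (h : Fin M → ℂ), (Λ k).mulVec h = 0 → h = 0)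
    -- `Λd k` is the Moore–Penrose pseudo-inverse of `Λ k`
    (Λd : ℕ → Matrix (Fin M) (Fin N) ℂ)
    (hMP1 : ∀ k, Λ k * Λd k * Λ k = Λ k)
    (hMP2 : ∀ k, Λd k * Λ k * Λd k = Λd k)
    (hMP3 : ∀ k, (Λ k * Λd k)ᴴ = Λ k * Λd k)
    (hMP4 : ∀ k, (Λd k * Λ k)ᴴ = Λd k * Λ k)
    (y : PiLp 2 Ys) (hy : ∃ x0, A x0 = y) :
    ∃ x : PiLp 2 Xs,
      (∀ m, HasSum
        (fun k => ((Λd k).mulVec (fun n => ⟪f n k, y n⟫) m) • T m (e m k)) (x m)) ∧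
      A x = y ∧ (∀ x' : PiLp 2 Xs, A x' = y → x' = x) :=
  frame_unique_solution_general A e f S T hS hTS Λ hΛ hinj Λd hMP1 y hy
end

section
/- Suppose the frame intertwining assumption holds, the frames {f_k^n} are tight, the range condition (Λ_k†·(⟨y_n,f_k^n⟩)_n)_m ∈ R(F_m) holds for each m, and additionally the frames {e_k^m} are tight. Then 𝒜y coincides with the minimum-norm least-squares solution x† of Ax = y. -/
/-!
Let `x` be the vector whose `e`-coefficients are `Λ†ₖ (⟪fₙₖ, yₙ⟫)ₙ` (range condition). For a tight
frame, synthesis with `B⁻¹ e` reconstructs a vector from its coefficients, and inner products on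
`∏ Xₘ` and `∏ Yₙ` are, up to the frame bound, sums over `k` of dot products of coefficient vectors.
By intertwining, the coefficients of `A w` are `Λₖ` times those of `w`. Hence `ΛΛ†Λ = Λ` and
`(ΛΛ†)ᴴ = ΛΛ†` make the residual `A x - y` orthogonal to the range of `A`, while `Λ†ΛΛ† = Λ†` and
`(Λ†Λ)ᴴ = Λ†Λ` make `x` orthogonal to the kernel of `A`; by Pythagoras these two relations
characterise the minimum-norm least-squares solution.
-/

open scoped InnerProductSpace ComplexInnerProductSpace ComplexConjugate Matrix
open Filter Topology

section Frame

variable {𝕜 ι E : Type*} [RCLike 𝕜] [NormedAddCommGroup E] [InnerProductSpace 𝕜 E]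
  {e : ι → E} {B : ℝ}

theorem norm_sum_smul_sq_le_of_bessel (hB : 0 ≤ B)
    (h : ∀ (x : E) (t : Finset ι), ∑ k ∈ t, ‖⟪e k, x⟫_𝕜‖ ^ 2 ≤ B * ‖x‖ ^ 2)
    (c : ι → 𝕜) (t : Finset ι) :
    ‖∑ k ∈ t, c k • e k‖ ^ 2 ≤ B * ∑ k ∈ t, ‖c k‖ ^ 2 := by
  set S := ∑ k ∈ t, c k • e k
  set P := ∑ k ∈ t, ‖c k‖ * ‖⟪e k, S⟫_𝕜‖
  have hSP : ‖S‖ ^ 2 ≤ P :=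
    calc ‖S‖ ^ 2 = RCLike.re ⟪S, S⟫_𝕜 := (inner_self_eq_norm_sq S).symm
      _ ≤ ‖∑ k ∈ t, conj (c k) * ⟪e k, S⟫_𝕜‖ := by
        simpa only [S, sum_inner, inner_smul_left] using RCLike.re_le_norm _
      _ ≤ P := (norm_sum_le _ _).trans_eq (by simp only [norm_mul, RCLike.norm_conj, P])
  have hCS := Finset.sum_mul_sq_le_sq_mul_sq t (fun k => ‖c k‖) (fun k => ‖⟪e k, S⟫_𝕜‖)
  rcases (sq_nonneg ‖S‖).eq_or_lt with hS | hS
  · rw [← hS]; positivity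
  refine le_of_mul_le_mul_right ?_ hS
  calc ‖S‖ ^ 2 * ‖S‖ ^ 2 ≤ P ^ 2 := (mul_self_le_mul_self (sq_nonneg _) hSP).trans_eq (sq P).symm
    _ ≤ (∑ k ∈ t, ‖c k‖ ^ 2) * (B * ‖S‖ ^ 2) := hCS.trans (by gcongr; exact h S t)
    _ = B * (∑ k ∈ t, ‖c k‖ ^ 2) * ‖S‖ ^ 2 := by ring

theorem hasSum_inner_smul_of_tight (hB : 0 < B)
    (h : ∀ x : E, HasSum (fun k => ‖⟪e k, x⟫_𝕜‖ ^ 2) (B * ‖x‖ ^ 2)) (x : E) :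
    HasSum (fun k => ⟪e k, x⟫_𝕜 • ((B⁻¹ : ℝ) : 𝕜) • e k) x := by
  have hbessel := fun y t => sum_le_hasSum t (fun k _ => by positivity) (h y)
  have hdist : ∀ t : Finset ι, ‖∑ k ∈ t, ⟪e k, x⟫_𝕜 • ((B⁻¹ : ℝ) : 𝕜) • e k - x‖ ^ 2 ≤
      ‖x‖ ^ 2 - B⁻¹ * ∑ k ∈ t, ‖⟪e k, x⟫_𝕜‖ ^ 2 := by
    intro t
    have hre : RCLike.re ⟪∑ k ∈ t, ⟪e k, x⟫_𝕜 • ((B⁻¹ : ℝ) : 𝕜) • e k, x⟫_𝕜 =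
        B⁻¹ * ∑ k ∈ t, ‖⟪e k, x⟫_𝕜‖ ^ 2 := by
      simp only [sum_inner, inner_smul_left, RCLike.conj_ofReal, map_sum, Finset.mul_sum]
      refine Finset.sum_congr rfl fun k _ => ?_
      rw [mul_left_comm, RCLike.conj_mul, ← RCLike.ofReal_pow, ← RCLike.ofReal_mul,
        RCLike.ofReal_re, mul_comm]
    have hsyn := norm_sum_smul_sq_le_of_bessel hB.le hbessel
      (fun k => ⟪e k, x⟫_𝕜 * ((B⁻¹ : ℝ) : 𝕜)) t
    have hB' : B * (∑ k ∈ t, ‖⟪e k, x⟫_𝕜‖ ^ 2 * ‖((B⁻¹ : ℝ) : 𝕜)‖ ^ 2) =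
        B⁻¹ * ∑ k ∈ t, ‖⟪e k, x⟫_𝕜‖ ^ 2 := by
      rw [← Finset.sum_mul, RCLike.norm_ofReal, sq_abs]
      field_simp
    simp only [mul_smul, norm_mul, mul_pow, hB'] at hsyn
    rw [norm_sub_sq (𝕜 := 𝕜), hre]
    linarith
  have hlim : Tendsto (fun t : Finset ι => ‖x‖ ^ 2 - B⁻¹ * ∑ k ∈ t, ‖⟪e k, x⟫_𝕜‖ ^ 2)
      atTop (𝓝 0) := by
    have := ((h x).const_mul B⁻¹).const_sub (‖x‖ ^ 2)
    rwa [inv_mul_cancel_left₀ hB.ne', sub_self] at this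
  refine tendsto_iff_norm_sub_tendsto_zero.2 <| squeeze_zero (fun _ => norm_nonneg _)
    (fun t => Real.le_sqrt_of_sq_le (hdist t)) ?_
  simpa using hlim.sqrt

theorem hasSum_conj_inner_mul_inner_of_tight (hB : 0 < B)
    (h : ∀ x : E, HasSum (fun k => ‖⟪e k, x⟫_𝕜‖ ^ 2) (B * ‖x‖ ^ 2)) (u v : E) :
    HasSum (fun k => conj ⟪e k, u⟫_𝕜 * ⟪e k, v⟫_𝕜) (B * ⟪u, v⟫_𝕜) := by
  have hB' : (B : 𝕜) ≠ 0 := RCLike.ofReal_ne_zero.2 hB.ne'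
  have key := ((innerSL 𝕜 u).hasSum (hasSum_inner_smul_of_tight hB h v)).mul_left (B : 𝕜)
  rw [innerSL_apply_apply] at key
  refine key.congr_fun fun k => ?_
  rw [innerSL_apply_apply, inner_smul_right, inner_smul_right, ← inner_conj_symm u (e k),
    RCLike.ofReal_inv]
  field_simp

end Frame

section PiLp

variable {𝕜 ι κ : Type*} [RCLike 𝕜] {E : ι → Type*}
  [∀ i, NormedAddCommGroup (E i)] [∀ i, InnerProductSpace 𝕜 (E i)]

variable (𝕜) in
def frameCoeffs (f : ∀ i, κ → E i) (u : PiLp 2 E) (k : κ) : ι → 𝕜 :=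
  fun i => ⟪f i k, u i⟫_𝕜

theorem frameCoeffs_sub (f : ∀ i, κ → E i) (u v : PiLp 2 E) (k : κ) :
    frameCoeffs 𝕜 f (u - v) k = frameCoeffs 𝕜 f u k - frameCoeffs 𝕜 f v k :=
  funext fun _ => inner_sub_right _ _ _

theorem frameCoeffs_zero (f : ∀ i, κ → E i) (k : κ) : frameCoeffs 𝕜 f 0 k = 0 :=
  funext fun _ => inner_zero_right _

theorem hasSum_star_frameCoeffs_dotProduct [Fintype ι] {f : ∀ i, κ → E i} {C : ℝ} (hC : 0 < C)
    (h : ∀ i (x : E i), HasSum (fun k => ‖⟪f i k, x⟫_𝕜‖ ^ 2) (C * ‖x‖ ^ 2)) (u v : PiLp 2 E) :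
    HasSum (fun k => star (frameCoeffs 𝕜 f u k) ⬝ᵥ frameCoeffs 𝕜 f v k) (C * ⟪u, v⟫_𝕜) := by
  rw [PiLp.inner_apply, Finset.mul_sum]
  exact hasSum_sum fun i _ => hasSum_conj_inner_mul_inner_of_tight hC (h i) (u i) (v i)

theorem inner_eq_zero_of_star_frameCoeffs_dotProduct_eq_zero [Fintype ι] {f : ∀ i, κ → E i}
    {C : ℝ} (hC : 0 < C)
    (h : ∀ i (x : E i), HasSum (fun k => ‖⟪f i k, x⟫_𝕜‖ ^ 2) (C * ‖x‖ ^ 2)) {u v : PiLp 2 E}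
    (huv : ∀ k, star (frameCoeffs 𝕜 f u k) ⬝ᵥ frameCoeffs 𝕜 f v k = 0) : ⟪u, v⟫_𝕜 = 0 := by
  have h0 := (hasSum_star_frameCoeffs_dotProduct hC h u v).unique
    (by simp only [huv]; exact hasSum_zero)
  exact (mul_eq_zero.1 h0).resolve_left (RCLike.ofReal_ne_zero.2 hC.ne')

end PiLp

namespace Matrix

variable {m n R : Type*} [Fintype m] [Fintype n] [CommRing R] [StarRing R]
  {Λ : Matrix n m R} {Λd : Matrix m n R}

theorem star_mulVec_dotProduct_mul_mulVec_sub_self (h1 : Λ * Λd * Λ = Λ)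
    (h3 : (Λ * Λd)ᴴ = Λ * Λd) (a : m → R) (b : n → R) :
    star (Λ *ᵥ a) ⬝ᵥ ((Λ * Λd) *ᵥ b - b) = 0 := by
  have hΛ : Λᴴ * (Λ * Λd) = Λᴴ := by
    rw [← h3, ← conjTranspose_mul, h1]
  rw [dotProduct_sub, star_mulVec, dotProduct_mulVec, vecMul_vecMul, hΛ, sub_self]

theorem star_dotProduct_mulVec_eq_zero_of_mulVec_eq_zero (h2 : Λd * Λ * Λd = Λd)
    (h4 : (Λd * Λ)ᴴ = Λd * Λ) {a : m → R} (ha : Λ *ᵥ a = 0) (b : n → R) :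
    star a ⬝ᵥ Λd *ᵥ b = 0 := by
  have hker : star a ᵥ* (Λd * Λ) = 0 := by
    rw [← h4, conjTranspose_mul, ← vecMul_vecMul, ← star_mulVec, ha, star_zero, zero_vecMul]
  rw [dotProduct_mulVec, ← h2, ← vecMul_vecMul, hker, zero_vecMul, zero_dotProduct]

end Matrix

namespace LinearMap

variable {𝕜 E F : Type*} [RCLike 𝕜] [NormedAddCommGroup E] [InnerProductSpace 𝕜 E]
  [NormedAddCommGroup F] [InnerProductSpace 𝕜 F] {A : E →ₗ[𝕜] F} {x : E} {y : F}

theorem norm_map_sub_mul_self_eq (hx : ∀ w, ⟪A w, A x - y⟫_𝕜 = 0) (z : E) :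
    ‖A z - y‖ * ‖A z - y‖ = ‖A (z - x)‖ * ‖A (z - x)‖ + ‖A x - y‖ * ‖A x - y‖ := by
  rw [← norm_add_sq_eq_norm_sq_add_norm_sq_of_inner_eq_zero _ _ (hx (z - x)), map_sub,
    sub_add_sub_cancel]

theorem norm_map_sub_le_of_inner_eq_zero (hx : ∀ w, ⟪A w, A x - y⟫_𝕜 = 0) (z : E) :
    ‖A x - y‖ ≤ ‖A z - y‖ :=
  mul_self_le_mul_self_iff (norm_nonneg _) (norm_nonneg _) |>.2 <| by
    rw [norm_map_sub_mul_self_eq hx z]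
    exact le_add_of_nonneg_left (mul_self_nonneg _)

theorem norm_le_of_forall_norm_map_sub_le (hx : ∀ w, ⟪A w, A x - y⟫_𝕜 = 0)
    (hker : ∀ v, A v = 0 → ⟪v, x⟫_𝕜 = 0) {z : E} (hz : ∀ w, ‖A z - y‖ ≤ ‖A w - y‖) :
    ‖x‖ ≤ ‖z‖ := by
  have hAzx : A (z - x) = 0 := by
    have := norm_map_sub_mul_self_eq hx z
    rw [le_antisymm (hz x) (norm_map_sub_le_of_inner_eq_zero hx z)] at this
    exact norm_eq_zero.1 (mul_self_eq_zero.1 (by linarith))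
  have hpyth : ‖z‖ * ‖z‖ = ‖x‖ * ‖x‖ + ‖z - x‖ * ‖z - x‖ := by
    simpa only [add_sub_cancel] using norm_add_sq_eq_norm_sq_add_norm_sq_of_inner_eq_zero _ _
      (inner_eq_zero_symm.1 (hker _ hAzx))
  refine (mul_self_le_mul_self_iff (norm_nonneg _) (norm_nonneg _)).2 ?_
  rw [hpyth]
  exact le_add_of_nonneg_right (mul_self_nonneg _)

end LinearMap

theorem frame_min_norm_least_squares_tight_general
    {M N : ℕ}
    {Xs : Fin M → Type*} [∀ m, NormedAddCommGroup (Xs m)]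
    [∀ m, InnerProductSpace ℂ (Xs m)]
    {Ys : Fin N → Type*} [∀ n, NormedAddCommGroup (Ys n)]
    [∀ n, InnerProductSpace ℂ (Ys n)]
    (A : PiLp 2 Xs →L[ℂ] PiLp 2 Ys)
    (e : ∀ m, ℕ → Xs m) (f : ∀ n, ℕ → Ys n)
    (B C : ℝ) (hB : 0 < B) (hC : 0 < C)
    (htight_e : ∀ (m) (x : Xs m), HasSum (fun k => ‖⟪e m k, x⟫‖ ^ 2) (B * ‖x‖ ^ 2))
    (htight_f : ∀ (n) (y : Ys n), HasSum (fun k => ‖⟪f n k, y⟫‖ ^ 2) (C * ‖y‖ ^ 2))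
    (Λ : ℕ → Matrix (Fin N) (Fin M) ℂ)
    (hΛ : ∀ (k : ℕ) (x : PiLp 2 Xs) (n : Fin N),
      ⟪f n k, A x n⟫ = ∑ m, Λ k n m * ⟪e m k, x m⟫)
    -- `Λd k` is the Moore–Penrose pseudo-inverse of `Λ k`
    (Λd : ℕ → Matrix (Fin M) (Fin N) ℂ)
    (hMP1 : ∀ k, Λ k * Λd k * Λ k = Λ k)
    (hMP2 : ∀ k, Λd k * Λ k * Λd k = Λd k)
    (hMP3 : ∀ k, (Λ k * Λd k)ᴴ = Λ k * Λd k)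
    (hMP4 : ∀ k, (Λd k * Λ k)ᴴ = Λd k * Λ k)
    (y : PiLp 2 Ys)
    -- the range condition: the coefficient sequences lie in the range of the
    -- analysis operators `F m`
    (hrange : ∀ m, ∃ z : Xs m, ∀ k,
      ⟪e m k, z⟫ = (Λd k).mulVec (fun n => ⟪f n k, y n⟫) m) :
    ∃ x : PiLp 2 Xs,
      (∀ m, HasSum
        (fun k => ((Λd k).mulVec (fun n => ⟪f n k, y n⟫) m) •
          (((B⁻¹ : ℝ) : ℂ) • e m k)) (x m)) ∧
      (∀ z : PiLp 2 Xs, ‖A x - y‖ ≤ ‖A z - y‖) ∧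
      (∀ z : PiLp 2 Xs, (∀ w : PiLp 2 Xs, ‖A z - y‖ ≤ ‖A w - y‖) → ‖x‖ ≤ ‖z‖) := by
  choose xv hxv using hrange
  set X : PiLp 2 Xs := WithLp.toLp 2 xv
  have hX : ∀ k, frameCoeffs ℂ e X k = Λd k *ᵥ frameCoeffs ℂ f y k :=
    fun k => funext fun m => hxv m k
  have hA : ∀ w k, frameCoeffs ℂ f (A w) k = Λ k *ᵥ frameCoeffs ℂ e w k :=
    fun w k => funext (hΛ k w)
  have hres : ∀ w, ⟪A w, A X - y⟫ = 0 := fun w =>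
    inner_eq_zero_of_star_frameCoeffs_dotProduct_eq_zero hC htight_f fun k => by
      rw [frameCoeffs_sub, hA, hA, hX, Matrix.mulVec_mulVec]
      exact Matrix.star_mulVec_dotProduct_mul_mulVec_sub_self (hMP1 k) (hMP3 k) _ _
  have hker : ∀ v, A v = 0 → ⟪v, X⟫ = 0 := fun v hv =>
    inner_eq_zero_of_star_frameCoeffs_dotProduct_eq_zero hB htight_e fun k => by
      rw [hX]
      refine Matrix.star_dotProduct_mulVec_eq_zero_of_mulVec_eq_zero (hMP2 k) (hMP4 k) ?_ _
      rw [← hA, hv, frameCoeffs_zero]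
  refine ⟨X, fun m => ?_, LinearMap.norm_map_sub_le_of_inner_eq_zero (A := A.toLinearMap) hres,
    fun z hz => LinearMap.norm_le_of_forall_norm_map_sub_le (A := A.toLinearMap) hres hker hz⟩
  exact (hasSum_inner_smul_of_tight hB (htight_e m) (X m)).congr_fun fun k => by
    rw [← hxv m k]; rfl

/-- If the intertwining assumption holds, the frames `{f n k}` are tight (bound `C`),
the range condition holds, and the frames `{e m k}` are also tight (bound `B`, so that
`ẽ m k = B⁻¹ • e m k`), then `𝒜y` coincides with the minimum-norm least-squares
solution `x†` of `A x = y`. -/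
theorem frame_min_norm_least_squares_tight
    {M N : ℕ}
    {Xs : Fin M → Type*} [∀ m, NormedAddCommGroup (Xs m)]
    [∀ m, InnerProductSpace ℂ (Xs m)] [∀ m, CompleteSpace (Xs m)]
    {Ys : Fin N → Type*} [∀ n, NormedAddCommGroup (Ys n)]
    [∀ n, InnerProductSpace ℂ (Ys n)] [∀ n, CompleteSpace (Ys n)]
    (A : PiLp 2 Xs →L[ℂ] PiLp 2 Ys)
    (e : ∀ m, ℕ → Xs m) (f : ∀ n, ℕ → Ys n)
    (B C : ℝ) (hB : 0 < B) (hC : 0 < C)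
    (htight_e : ∀ (m) (x : Xs m), HasSum (fun k => ‖⟪e m k, x⟫‖ ^ 2) (B * ‖x‖ ^ 2))
    (htight_f : ∀ (n) (y : Ys n), HasSum (fun k => ‖⟪f n k, y⟫‖ ^ 2) (C * ‖y‖ ^ 2))
    (Λ : ℕ → Matrix (Fin N) (Fin M) ℂ)
    (hΛ : ∀ (k : ℕ) (x : PiLp 2 Xs) (n : Fin N),
      ⟪f n k, A x n⟫ = ∑ m, Λ k n m * ⟪e m k, x m⟫)
    -- `Λd k` is the Moore–Penrose pseudo-inverse of `Λ k`
    (Λd : ℕ → Matrix (Fin M) (Fin N) ℂ)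
    (hMP1 : ∀ k, Λ k * Λd k * Λ k = Λ k)
    (hMP2 : ∀ k, Λd k * Λ k * Λd k = Λd k)
    (hMP3 : ∀ k, (Λ k * Λd k)ᴴ = Λ k * Λd k)
    (hMP4 : ∀ k, (Λd k * Λ k)ᴴ = Λd k * Λ k)
    (y : PiLp 2 Ys)
    -- the range condition: the coefficient sequences lie in the range of the
    -- analysis operators `F m`
    (hrange : ∀ m, ∃ z : Xs m, ∀ k,
      ⟪e m k, z⟫ = (Λd k).mulVec (fun n => ⟪f n k, y n⟫) m) :
    ∃ x : PiLp 2 Xs,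
      (∀ m, HasSum
        (fun k => ((Λd k).mulVec (fun n => ⟪f n k, y n⟫) m) •
          (((B⁻¹ : ℝ) : ℂ) • e m k)) (x m)) ∧
      (∀ z : PiLp 2 Xs, ‖A x - y‖ ≤ ‖A z - y‖) ∧
      (∀ z : PiLp 2 Xs, (∀ w : PiLp 2 Xs, ‖A z - y‖ ≤ ‖A w - y‖) → ‖x‖ ≤ ‖z‖) :=
  frame_min_norm_least_squares_tight_general A e f B C hB hC htight_e htight_f Λ hΛ Λd hMP1 hMP2
    hMP3 hMP4 y hrange
end

section
/- Let A : X → Y be bounded linear with c1‖x‖_X ≤ ‖Ax‖_Z ≤ c2‖x‖_X for a Hilbert space Z ⊆ Y, let {f_k} be a frame over Y, and suppose there are coefficients α_k ≠ 0 with a1‖y‖_Z² ≤ Σ_k α_k²|⟨y,f_k⟩_Y|² ≤ a2‖y‖_Z² for all y ∈ Z. If λ_k ∈ ℂ satisfy 0 < b1 ≤ α_k|λ_k| ≤ b2 < ∞ and e_k := λ̄_k⁻¹ A* f_k, then {e_k} is a frame over X with bounds a1(c1/b2)² and a2(c2/b1)². -/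
open scoped ComplexInnerProductSpace

/-!
Since `⟪e k, x⟫ = (λ k)⁻¹ ⟪f k, A x⟫`, each term `‖⟪e k, x⟫‖²` is the weighted term
`α k² ‖⟪f k, A x⟫‖²` divided by `(α k ‖λ k‖)² ∈ [b1², b2²]`. Summing, the weighted norm
equivalence applied to `B x` and then the stability of `B` give the two frame bounds.
-/

section WeightedSums

variable {ι : Type*} {w r : ι → ℝ} {b1 b2 : ℝ}

theorem div_sq_le_div_sq_of_le {a b c : ℝ} (ha : 0 ≤ a) (hb : 0 < b) (hbc : b ≤ c) :
    a / c ^ 2 ≤ a / b ^ 2 :=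
  div_le_div_of_nonneg_left ha (by positivity) (pow_le_pow_left₀ hb.le hbc 2)

theorem summable_div_sq_of_le (hw : Summable w) (hw0 : ∀ k, 0 ≤ w k) (hb1 : 0 < b1)
    (hr : ∀ k, b1 ≤ r k) : Summable fun k => w k / r k ^ 2 :=
  (hw.div_const (b1 ^ 2)).of_nonneg_of_le (fun k => div_nonneg (hw0 k) (sq_nonneg _))
    fun k => div_sq_le_div_sq_of_le (hw0 k) hb1 (hr k)

theorem tsum_div_sq_le (hw : Summable w) (hw0 : ∀ k, 0 ≤ w k) (hb1 : 0 < b1)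
    (hr : ∀ k, b1 ≤ r k) : ∑' k, w k / r k ^ 2 ≤ (∑' k, w k) / b1 ^ 2 := by
  rw [← tsum_div_const]
  exact (summable_div_sq_of_le hw hw0 hb1 hr).tsum_le_tsum
    (fun k => div_sq_le_div_sq_of_le (hw0 k) hb1 (hr k)) (hw.div_const _)

theorem le_tsum_div_sq (hw : Summable w) (hw0 : ∀ k, 0 ≤ w k) (hb1 : 0 < b1)
    (hr : ∀ k, b1 ≤ r k) (hr' : ∀ k, r k ≤ b2) : (∑' k, w k) / b2 ^ 2 ≤ ∑' k, w k / r k ^ 2 := by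
  rw [← tsum_div_const]
  exact (hw.div_const _).tsum_le_tsum
    (fun k => div_sq_le_div_sq_of_le (hw0 k) (hb1.trans_le (hr k)) (hr' k))
    (summable_div_sq_of_le hw hw0 hb1 hr)

end WeightedSums

theorem norm_inner_inv_conj_smul_adjoint {𝕜 X Y : Type*} [RCLike 𝕜]
    [NormedAddCommGroup X] [InnerProductSpace 𝕜 X] [CompleteSpace X]
    [NormedAddCommGroup Y] [InnerProductSpace 𝕜 Y] [CompleteSpace Y]
    (A : X →L[𝕜] Y) (μ : 𝕜) (y : Y) (x : X) :
    ‖inner 𝕜 ((starRingEnd 𝕜 μ)⁻¹ • ContinuousLinearMap.adjoint A y) x‖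
      = ‖inner 𝕜 y (A x)‖ / ‖μ‖ := by
  rw [inner_smul_left, ContinuousLinearMap.adjoint_inner_left, norm_mul, map_inv₀,
    RCLike.conj_conj, norm_inv, inv_mul_eq_div]

theorem stability_frame_construction_general
    {X Y Z : Type*} [NormedAddCommGroup X] [InnerProductSpace ℂ X] [CompleteSpace X]
    [NormedAddCommGroup Y] [InnerProductSpace ℂ Y] [CompleteSpace Y]
    [NormedAddCommGroup Z] [InnerProductSpace ℂ Z] [CompleteSpace Z]
    (A : X →L[ℂ] Y)
    -- `E` embeds the subspace `Z` into `Y`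
    (E : Z →L[ℂ] Y)
    -- `B` is `A` viewed as an operator into `Z`: `A = E ∘ B`
    (B : X →L[ℂ] Z) (hAB : ∀ x, E (B x) = A x)
    (c1 c2 a1 a2 b1 b2 : ℝ)
    (hc1 : 0 < c1) (ha1 : 0 < a1) (ha2 : 0 < a2)
    (hb1 : 0 < b1)
    -- stability: `c1‖x‖_X ≤ ‖Ax‖_Z ≤ c2‖x‖_X`
    (hstab : ∀ x : X, c1 * ‖x‖ ≤ ‖B x‖ ∧ ‖B x‖ ≤ c2 * ‖x‖)
    (f : ℕ → Y)
    -- weighted norm equivalence for the `Z`-norm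
    (α : ℕ → ℝ)
    (hZnorm : ∀ z : Z, (Summable fun k => (α k) ^ 2 * ‖⟪f k, E z⟫‖ ^ 2) ∧
      a1 * ‖z‖ ^ 2 ≤ ∑' k, (α k) ^ 2 * ‖⟪f k, E z⟫‖ ^ 2 ∧
      ∑' k, (α k) ^ 2 * ‖⟪f k, E z⟫‖ ^ 2 ≤ a2 * ‖z‖ ^ 2)
    (lam : ℕ → ℂ)
    (hlam : ∀ k, b1 ≤ α k * ‖lam k‖ ∧ α k * ‖lam k‖ ≤ b2)
    (e : ℕ → X)
    (he : ∀ k, e k = ((starRingEnd ℂ) (lam k))⁻¹ • (ContinuousLinearMap.adjoint A) (f k)) :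
    ∀ x : X, (Summable fun k => ‖⟪e k, x⟫‖ ^ 2) ∧
      a1 * (c1 / b2) ^ 2 * ‖x‖ ^ 2 ≤ ∑' k, ‖⟪e k, x⟫‖ ^ 2 ∧
      ∑' k, ‖⟪e k, x⟫‖ ^ 2 ≤ a2 * (c2 / b1) ^ 2 * ‖x‖ ^ 2 := by
  intro x
  obtain ⟨hsum, hlow, hup⟩ := hZnorm (B x)
  simp only [hAB] at hsum hlow hup
  have hα : ∀ k, α k ≠ 0 := fun k => left_ne_zero_of_mul (hb1.trans_le (hlam k).1).ne'
  have hterm : ∀ k, ‖⟪e k, x⟫‖ ^ 2 = α k ^ 2 * ‖⟪f k, A x⟫‖ ^ 2 / (α k * ‖lam k‖) ^ 2 := by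
    intro k
    rw [he k, norm_inner_inv_conj_smul_adjoint, div_pow, mul_pow,
      mul_div_mul_left _ _ (pow_ne_zero 2 (hα k))]
  simp only [hterm]
  have hw0 : ∀ k, 0 ≤ α k ^ 2 * ‖⟪f k, A x⟫‖ ^ 2 := fun k => by positivity
  have hb1_le : ∀ k, b1 ≤ α k * ‖lam k‖ := fun k => (hlam k).1
  refine ⟨summable_div_sq_of_le hsum hw0 hb1 hb1_le, ?_, ?_⟩
  · calc a1 * (c1 / b2) ^ 2 * ‖x‖ ^ 2 = a1 * (c1 * ‖x‖) ^ 2 / b2 ^ 2 := by ring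
      _ ≤ a1 * ‖B x‖ ^ 2 / b2 ^ 2 := by gcongr; exact (hstab x).1
      _ ≤ (∑' k, α k ^ 2 * ‖⟪f k, A x⟫‖ ^ 2) / b2 ^ 2 := by gcongr
      _ ≤ _ := le_tsum_div_sq hsum hw0 hb1 hb1_le fun k => (hlam k).2
  · calc _ ≤ (∑' k, α k ^ 2 * ‖⟪f k, A x⟫‖ ^ 2) / b1 ^ 2 := tsum_div_sq_le hsum hw0 hb1 hb1_le
      _ ≤ a2 * ‖B x‖ ^ 2 / b1 ^ 2 := by gcongr
      _ ≤ a2 * (c2 * ‖x‖) ^ 2 / b1 ^ 2 := by gcongr; exact (hstab x).2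
      _ = a2 * (c2 / b1) ^ 2 * ‖x‖ ^ 2 := by ring

/-- Stability property I: if `c1‖x‖_X ≤ ‖Ax‖_Z ≤ c2‖x‖_X` (with `B : X →L Z` the
co-restriction of `A` along the embedding `E : Z → Y`), `{f k}` is a frame over `Y`,
`a1‖y‖_Z² ≤ ∑ α k² |⟪f k, y⟫_Y|² ≤ a2‖y‖_Z²` for `y ∈ Z`, and `b1 ≤ α k |λ k| ≤ b2`,
then `e k := (conj (λ k))⁻¹ • A* (f k)` is a frame over `X` with bounds
`a1 (c1/b2)²` and `a2 (c2/b1)²`. -/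
theorem stability_frame_construction
    {X Y Z : Type*} [NormedAddCommGroup X] [InnerProductSpace ℂ X] [CompleteSpace X]
    [NormedAddCommGroup Y] [InnerProductSpace ℂ Y] [CompleteSpace Y]
    [NormedAddCommGroup Z] [InnerProductSpace ℂ Z] [CompleteSpace Z]
    (A : X →L[ℂ] Y)
    -- `E` embeds the subspace `Z` into `Y`
    (E : Z →L[ℂ] Y) (hE : Function.Injective E)
    -- `B` is `A` viewed as an operator into `Z`: `A = E ∘ B`
    (B : X →L[ℂ] Z) (hAB : ∀ x, E (B x) = A x)
    (c1 c2 a1 a2 b1 b2 : ℝ)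
    (hc1 : 0 < c1) (hc2 : 0 < c2) (ha1 : 0 < a1) (ha2 : 0 < a2)
    (hb1 : 0 < b1) (hb2 : 0 < b2)
    -- stability: `c1‖x‖_X ≤ ‖Ax‖_Z ≤ c2‖x‖_X`
    (hstab : ∀ x : X, c1 * ‖x‖ ≤ ‖B x‖ ∧ ‖B x‖ ≤ c2 * ‖x‖)
    -- `{f k}` is a frame over `Y`
    (f : ℕ → Y) (C1 C2 : ℝ) (hC1 : 0 < C1) (hC2 : 0 < C2)
    (hframe_f : ∀ y : Y, (Summable fun k => ‖⟪f k, y⟫‖ ^ 2) ∧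
      C1 * ‖y‖ ^ 2 ≤ ∑' k, ‖⟪f k, y⟫‖ ^ 2 ∧ ∑' k, ‖⟪f k, y⟫‖ ^ 2 ≤ C2 * ‖y‖ ^ 2)
    -- weighted norm equivalence for the `Z`-norm
    (α : ℕ → ℝ) (hα : ∀ k, α k ≠ 0)
    (hZnorm : ∀ z : Z, (Summable fun k => (α k) ^ 2 * ‖⟪f k, E z⟫‖ ^ 2) ∧
      a1 * ‖z‖ ^ 2 ≤ ∑' k, (α k) ^ 2 * ‖⟪f k, E z⟫‖ ^ 2 ∧
      ∑' k, (α k) ^ 2 * ‖⟪f k, E z⟫‖ ^ 2 ≤ a2 * ‖z‖ ^ 2)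
    (lam : ℕ → ℂ)
    (hlam : ∀ k, b1 ≤ α k * ‖lam k‖ ∧ α k * ‖lam k‖ ≤ b2)
    (e : ℕ → X)
    (he : ∀ k, e k = ((starRingEnd ℂ) (lam k))⁻¹ • (ContinuousLinearMap.adjoint A) (f k)) :
    ∀ x : X, (Summable fun k => ‖⟪e k, x⟫‖ ^ 2) ∧
      a1 * (c1 / b2) ^ 2 * ‖x‖ ^ 2 ≤ ∑' k, ‖⟪e k, x⟫‖ ^ 2 ∧
      ∑' k, ‖⟪e k, x⟫‖ ^ 2 ≤ a2 * (c2 / b1) ^ 2 * ‖x‖ ^ 2 :=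
  stability_frame_construction_general A E B hAB c1 c2 a1 a2 b1 b2 hc1 ha1 ha2 hb1 hstab f α hZnorm
    lam hlam e he
end

section
/- Under the stability assumption c1‖x‖_X ≤ ‖Ax‖_Z ≤ c2‖x‖_X and the weighted frame norm-equivalence for ‖·‖_Z, with e_k := λ̄_k⁻¹ A* f_k and b1 ≤ α_k|λ_k| ≤ b2, for every y ∈ Z the element 𝒜y := Σ_{k: λ_k≠0} λ_k⁻¹⟨y,f_k⟩ ẽ_k is the unique solution of Ax = y. -/
open scoped ComplexInnerProductSpace

/-- Stability property: under the stability assumption and weighted frame norm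
equivalence, with `e k := (conj (λ k))⁻¹ • A* (f k)` and `b1 ≤ α k |λ k| ≤ b2`, for
every `y ∈ Z` the element `𝒜y := ∑_k λ k⁻¹ ⟪f k, y⟫ • ẽ k` is the unique solution of
`A x = y`. -/
theorem stability_frame_unique_solution
    {X Y Z : Type*} [NormedAddCommGroup X] [InnerProductSpace ℂ X] [CompleteSpace X]
    [NormedAddCommGroup Y] [InnerProductSpace ℂ Y] [CompleteSpace Y]
    [NormedAddCommGroup Z] [InnerProductSpace ℂ Z] [CompleteSpace Z]
    (A : X →L[ℂ] Y)
    (E : Z →L[ℂ] Y) (hE : Function.Injective E)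
    (B : X →L[ℂ] Z) (hAB : ∀ x, E (B x) = A x)
    -- `R(A) = Z`: every element of `Z` is attained
    (hsurj : ∀ z : Z, ∃ x : X, B x = z)
    (c1 c2 a1 a2 b1 b2 : ℝ)
    (hc1 : 0 < c1) (hc2 : 0 < c2) (ha1 : 0 < a1) (ha2 : 0 < a2)
    (hb1 : 0 < b1) (hb2 : 0 < b2)
    (hstab : ∀ x : X, c1 * ‖x‖ ≤ ‖B x‖ ∧ ‖B x‖ ≤ c2 * ‖x‖)
    (f : ℕ → Y) (C1 C2 : ℝ) (hC1 : 0 < C1) (hC2 : 0 < C2)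
    (hframe_f : ∀ y : Y, (Summable fun k => ‖⟪f k, y⟫‖ ^ 2) ∧
      C1 * ‖y‖ ^ 2 ≤ ∑' k, ‖⟪f k, y⟫‖ ^ 2 ∧ ∑' k, ‖⟪f k, y⟫‖ ^ 2 ≤ C2 * ‖y‖ ^ 2)
    (α : ℕ → ℝ) (hα : ∀ k, α k ≠ 0)
    (hZnorm : ∀ z : Z, (Summable fun k => (α k) ^ 2 * ‖⟪f k, E z⟫‖ ^ 2) ∧
      a1 * ‖z‖ ^ 2 ≤ ∑' k, (α k) ^ 2 * ‖⟪f k, E z⟫‖ ^ 2 ∧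
      ∑' k, (α k) ^ 2 * ‖⟪f k, E z⟫‖ ^ 2 ≤ a2 * ‖z‖ ^ 2)
    (lam : ℕ → ℂ)
    (hlam : ∀ k, b1 ≤ α k * ‖lam k‖ ∧ α k * ‖lam k‖ ≤ b2)
    (e : ℕ → X)
    (he : ∀ k, e k = ((starRingEnd ℂ) (lam k))⁻¹ • (ContinuousLinearMap.adjoint A) (f k))
    -- frame operator of `{e k}` and its inverse, giving the dual frame `ẽ k = Te (e k)`
    (Se Te : X →L[ℂ] X)
    (hSe : ∀ x : X, HasSum (fun k => ⟪e k, x⟫ • e k) (Se x))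
    (hSTe : Se ∘L Te = 1) (hTSe : Te ∘L Se = 1) :
    ∀ z : Z, ∃ x : X,
      HasSum (fun k => ((lam k)⁻¹ * ⟪f k, E z⟫) • Te (e k)) x ∧
      A x = E z ∧ (∀ x' : X, A x' = E z → x' = x) := by
  intro z
  obtain ⟨x₀, hx₀⟩ := hsurj z
  have hAx₀ : A x₀ = E z := by rw [← hAB, hx₀]
  have hcoef : ∀ k, ((lam k)⁻¹ * ⟪f k, E z⟫) = ⟪e k, x₀⟫ := by
    intro k
    rw [he k, inner_smul_left, ContinuousLinearMap.adjoint_inner_left, hAx₀,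
      map_inv₀, Complex.conj_conj]
  have hsum : HasSum (fun k => ((lam k)⁻¹ * ⟪f k, E z⟫) • Te (e k)) x₀ := by
    have h1 := (hSe x₀).mapL Te
    have h2 : Te (Se x₀) = x₀ := by
      have := congrArg (fun T : X →L[ℂ] X => T x₀) hTSe
      simpa using this
    simp only [map_smul] at h1
    rw [h2] at h1
    exact h1.congr_fun fun k => by rw [hcoef]
  refine ⟨x₀, hsum, hAx₀, fun x' hx' => ?_⟩
  have hB : B x' = B x₀ := hE (by rw [hAB, hAB, hx', hAx₀])
  have h3 := (hstab (x' - x₀)).1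
  rw [map_sub, hB, sub_self, norm_zero] at h3
  have hn := norm_nonneg (x' - x₀)
  have hz : ‖x' - x₀‖ = 0 := by nlinarith
  rw [norm_eq_zero, sub_eq_zero] at hz
  exact hz
end

section
/- Let A : X → Y be bounded linear with c1‖x‖_X ≤ ‖Ax‖_Z ≤ c2‖x‖_X for a dense Hilbert subspace Z ⊆ Y with ‖y‖_Y ≤ ‖y‖_Z, and let L be the densely defined self-adjoint positive operator with D(L) = Z and ‖Ly‖_Y = ‖y‖_Z. If {f_k} is a frame over Y with bounds C1, C2 and each f_k ∈ Z, then the functions e_k := A* L f_k form a frame over X with frame bounds c1²C1 and c2²C2. -/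
open scoped ComplexInnerProductSpace

/-- Stability property II: if `c1‖x‖_X ≤ ‖Ax‖_Z ≤ c2‖x‖_X` for a dense Hilbert
subspace `Z ⊆ Y` with `‖y‖_Y ≤ ‖y‖_Z`, and `L` is the (restriction to `Z` of the)
densely defined self-adjoint positive operator with `D(L) = Z` and `‖Ly‖_Y = ‖y‖_Z`,
then for any frame `{f k} ⊆ Z` over `Y` with bounds `C1, C2`, the functions
`e k := A* L (f k)` form a frame over `X` with bounds `c1² C1` and `c2² C2`. -/
theorem stability_frame_construction_L
    {X Y Z : Type*} [NormedAddCommGroup X] [InnerProductSpace ℂ X] [CompleteSpace X]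
    [NormedAddCommGroup Y] [InnerProductSpace ℂ Y] [CompleteSpace Y]
    [NormedAddCommGroup Z] [InnerProductSpace ℂ Z] [CompleteSpace Z]
    (A : X →L[ℂ] Y)
    -- the embedding `E : Z → Y`, injective with dense range and `‖y‖_Y ≤ ‖y‖_Z`
    (E : Z →L[ℂ] Y) (hE : Function.Injective E) (hEdense : DenseRange E)
    (hEnorm : ∀ z : Z, ‖E z‖ ≤ ‖z‖)
    -- `L` restricted to `Z`: isometric from `Z` into `Y` and symmetric
    (L : Z →L[ℂ] Y) (hLiso : ∀ z : Z, ‖L z‖ = ‖z‖)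
    (hLsym : ∀ z w : Z, ⟪L z, E w⟫ = ⟪E z, L w⟫)
    -- `B` is `A` viewed as an operator into `Z`: `A = E ∘ B`
    (B : X →L[ℂ] Z) (hAB : ∀ x, E (B x) = A x)
    (c1 c2 : ℝ) (hc1 : 0 < c1) (hc2 : 0 < c2)
    (hstab : ∀ x : X, c1 * ‖x‖ ≤ ‖B x‖ ∧ ‖B x‖ ≤ c2 * ‖x‖)
    -- `{f k}` is a frame over `Y` whose members belong to `Z`
    (f : ℕ → Z) (C1 C2 : ℝ) (hC1 : 0 < C1) (hC2 : 0 < C2)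
    (hframe_f : ∀ y : Y, (Summable fun k => ‖⟪E (f k), y⟫‖ ^ 2) ∧
      C1 * ‖y‖ ^ 2 ≤ ∑' k, ‖⟪E (f k), y⟫‖ ^ 2 ∧ ∑' k, ‖⟪E (f k), y⟫‖ ^ 2 ≤ C2 * ‖y‖ ^ 2)
    (e : ℕ → X)
    (he : ∀ k, e k = (ContinuousLinearMap.adjoint A) (L (f k))) :
    ∀ x : X, (Summable fun k => ‖⟪e k, x⟫‖ ^ 2) ∧
      c1 ^ 2 * C1 * ‖x‖ ^ 2 ≤ ∑' k, ‖⟪e k, x⟫‖ ^ 2 ∧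
      ∑' k, ‖⟪e k, x⟫‖ ^ 2 ≤ c2 ^ 2 * C2 * ‖x‖ ^ 2 := by
  intro x
  have hkey : ∀ k, ⟪e k, x⟫ = ⟪E (f k), L (B x)⟫ := by
    intro k
    rw [he k, ContinuousLinearMap.adjoint_inner_left, ← hAB, ← hLsym]
  obtain ⟨hs, h1, h2⟩ := hframe_f (L (B x))
  have hLB : ‖L (B x)‖ = ‖B x‖ := hLiso _
  have hb := hstab x
  have hsq1 : c1 ^ 2 * ‖x‖ ^ 2 ≤ ‖L (B x)‖ ^ 2 := by
    rw [hLB, ← mul_pow]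
    exact pow_le_pow_left₀ (by positivity) hb.1 2
  have hsq2 : ‖L (B x)‖ ^ 2 ≤ c2 ^ 2 * ‖x‖ ^ 2 := by
    rw [hLB, ← mul_pow]
    exact pow_le_pow_left₀ (norm_nonneg _) hb.2 2
  simp only [hkey]
  refine ⟨hs, ?_, ?_⟩
  · calc c1 ^ 2 * C1 * ‖x‖ ^ 2 = C1 * (c1 ^ 2 * ‖x‖ ^ 2) := by ring
    _ ≤ C1 * ‖L (B x)‖ ^ 2 := by nlinarith
    _ ≤ _ := h1
  · calc _ ≤ C2 * ‖L (B x)‖ ^ 2 := h2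
    _ ≤ C2 * (c2 ^ 2 * ‖x‖ ^ 2) := by nlinarith
    _ = c2 ^ 2 * C2 * ‖x‖ ^ 2 := by ring
end

section
/- In the setting where e_k := A* L f_k and A satisfies the stability estimate c1‖x‖_X ≤ ‖Ax‖_Z ≤ c2‖x‖_X, for every y ∈ Z the element 𝒜̄y := Σ_k ⟨Ly, f_k⟩_Y ẽ_k is a well-defined element of X and is the unique solution of Ax = y; moreover ⟨LAx, f_k⟩_Y = ⟨x, e_k⟩_X for all x ∈ X and k. -/
open scoped ComplexInnerProductSpace

/-- With `e k := A* L (f k)` and `A` satisfying the stability estimate, for every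
`y ∈ Z` the element `𝒜̄y := ∑_k ⟪f k, L y⟫_Y • ẽ k` is a well-defined element of `X`
and the unique solution of `A x = y`; moreover `⟪f k, L A x⟫_Y = ⟪e k, x⟫_X` for all
`x` and `k`. -/
theorem stability_frame_solution_L
    {X Y Z : Type*} [NormedAddCommGroup X] [InnerProductSpace ℂ X] [CompleteSpace X]
    [NormedAddCommGroup Y] [InnerProductSpace ℂ Y] [CompleteSpace Y]
    [NormedAddCommGroup Z] [InnerProductSpace ℂ Z] [CompleteSpace Z]
    (A : X →L[ℂ] Y)
    (E : Z →L[ℂ] Y) (hE : Function.Injective E) (hEdense : DenseRange E)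
    (hEnorm : ∀ z : Z, ‖E z‖ ≤ ‖z‖)
    (L : Z →L[ℂ] Y) (hLiso : ∀ z : Z, ‖L z‖ = ‖z‖)
    (hLsym : ∀ z w : Z, ⟪L z, E w⟫ = ⟪E z, L w⟫)
    (B : X →L[ℂ] Z) (hAB : ∀ x, E (B x) = A x)
    (c1 c2 : ℝ) (hc1 : 0 < c1) (hc2 : 0 < c2)
    (hstab : ∀ x : X, c1 * ‖x‖ ≤ ‖B x‖ ∧ ‖B x‖ ≤ c2 * ‖x‖)
    -- `R(A) = Z`
    (hsurj : ∀ z : Z, ∃ x : X, B x = z)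
    (f : ℕ → Z) (C1 C2 : ℝ) (hC1 : 0 < C1) (hC2 : 0 < C2)
    (hframe_f : ∀ y : Y, (Summable fun k => ‖⟪E (f k), y⟫‖ ^ 2) ∧
      C1 * ‖y‖ ^ 2 ≤ ∑' k, ‖⟪E (f k), y⟫‖ ^ 2 ∧ ∑' k, ‖⟪E (f k), y⟫‖ ^ 2 ≤ C2 * ‖y‖ ^ 2)
    (e : ℕ → X)
    (he : ∀ k, e k = (ContinuousLinearMap.adjoint A) (L (f k)))
    -- frame operator of `{e k}` and its inverse, giving the dual frame `ẽ k = Te (e k)`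
    (Se Te : X →L[ℂ] X)
    (hSe : ∀ x : X, HasSum (fun k => ⟪e k, x⟫ • e k) (Se x))
    (hSTe : Se ∘L Te = 1) (hTSe : Te ∘L Se = 1) :
    (∀ (x : X) (k : ℕ), ⟪E (f k), L (B x)⟫ = ⟪e k, x⟫) ∧
    ∀ z : Z, ∃ x : X,
      HasSum (fun k => ⟪E (f k), L z⟫ • Te (e k)) x ∧
      A x = E z ∧ (∀ x' : X, A x' = E z → x' = x) := by
  have key : ∀ (x : X) (k : ℕ), ⟪E (f k), L (B x)⟫ = ⟪e k, x⟫ := by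
    intro x k
    rw [← hLsym, hAB, he, ContinuousLinearMap.adjoint_inner_left]
  refine ⟨key, fun z => ?_⟩
  obtain ⟨x, hx⟩ := hsurj z
  refine ⟨x, ?_, ?_, ?_⟩
  · have h1 : HasSum (fun k => ⟪e k, x⟫ • Te (e k)) (Te (Se x)) := by
      simpa using (hSe x).mapL Te
    have h2 : Te (Se x) = x := by
      have := congrArg (fun T : X →L[ℂ] X => T x) hTSe
      simpa using this
    rw [h2] at h1
    refine h1.congr_fun fun k => ?_
    rw [← hx, key]
  · rw [← hAB, hx]
  · intro x' hx'
    have hB : B x' = B x := by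
      apply hE
      rw [hAB, hAB, hx', ← hAB, hx]
    have : c1 * ‖x' - x‖ ≤ ‖B (x' - x)‖ := (hstab _).1
    rw [map_sub, hB, sub_self, norm_zero] at this
    have hn : ‖x' - x‖ = 0 := by nlinarith [norm_nonneg (x' - x)]
    have := norm_eq_zero.mp hn
    exact sub_eq_zero.mp this
end
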